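/- If a complete graph on an even vertex set has nonnegative edge weights and C is a Hamiltonian cycle, then the minimum-weight perfect matching has weight at most half the weight of C. -/

import Mathlib

open scoped Classical

/-- Cyclic weight of a closed tour given by the vertex list `l`:
the sum of `ρ` over consecutive pairs, including the pair closing the cycle. -/
def cycWeight {V : Type*} (ρ : V → V → ℝ) (l : List V) : ℝ :=
  ((l.zip (l.rotate 1)).map fun p => ρ p.1 p.2).sum

/-- The (cyclic) list of edges of a closed tour given by the vertex list `l`. -/
def cycEdges {V : Type*} (l : List V) : List (Sym2 V) :=
  (l.zip (l.rotate 1)).map Sym2.mk.uncurry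

/-- The list of endpoints of a list of matching pairs. -/
def matchVerts {V : Type*} (M : List (V × V)) : List V :=
  M.flatMap fun p => [p.1, p.2]

/-- `M` is a perfect matching on the vertex set `X`: a partition of `X` into pairs. -/
def IsPM {V : Type*} [DecidableEq V] (X : Finset V) (M : List (V × V)) : Prop :=
  (matchVerts M).Nodup ∧ (matchVerts M).toFinset = X

/-- The weight of a matching: the sum of weights of its pairs. -/
def mWeight {V : Type*} (ρ : V → V → ℝ) (M : List (V × V)) : ℝ :=
  (M.map fun p => ρ p.1 p.2).sum

/-- Total edge weight of a graph. -/
noncomputable def gWeight {V : Type*} [Fintype V] (f : Sym2 V → ℝ) (T : SimpleGraph V) : ℝ :=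
  ∑ e ∈ T.edgeSet.toFinset, f e

/-- The weight of a walk in the graph `G` with edge weights `f`
(edges are counted with multiplicity). -/
def walkWeight {V : Type*} (G : SimpleGraph V) (f : Sym2 V → ℝ) {u v : V} (p : G.Walk u v) : ℝ :=
  (p.edges.map f).sum

/-- Shortest-path distance between `i` and `j` (metric closure of `G`). -/
noncomputable def sdist {V : Type*} (G : SimpleGraph V) (f : Sym2 V → ℝ) (i j : V) : ℝ :=
  sInf {x | ∃ p : G.Walk i j, x = walkWeight G f p}

/-! Pairing the Hamiltonian cycle `x₀ x₁ … x₂ₖ₋₁` alternately gives the two perfect matchings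
`{x₀x₁, x₂x₃, …}` and `{x₁x₂, …, x₂ₖ₋₁x₀}`, which together use every edge of the cycle exactly
once; the lighter of the two weighs at most half the cycle. -/

section AlternatePairs

variable {V : Type*}

def pairUp : List V → List (V × V)
  | a :: b :: t => (a, b) :: pairUp t
  | _ => []

def pathWeight (ρ : V → V → ℝ) (l : List V) : ℝ :=
  ((l.zip l.tail).map fun p => ρ p.1 p.2).sum

theorem pathWeight_cons_cons (ρ : V → V → ℝ) (a b : V) (t : List V) :
    pathWeight ρ (a :: b :: t) = ρ a b + pathWeight ρ (b :: t) := by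
  simp [pathWeight]

theorem matchVerts_pairUp : ∀ {l : List V}, Even l.length → matchVerts (pairUp l) = l
  | [], _ => rfl
  | [_], h => by simp at h
  | a :: b :: t, h => by
    have ht : Even t.length := by simpa [Nat.even_add_one] using h
    simpa [pairUp, matchVerts] using matchVerts_pairUp ht

theorem pairUp_append_singleton (z : V) : ∀ {l : List V}, Even l.length →
    pairUp (l ++ [z]) = pairUp l
  | [], _ => rfl
  | [_], h => by simp at h
  | a :: b :: t, h => by
    have ht : Even t.length := by simpa [Nat.even_add_one] using h
    simp [pairUp, pairUp_append_singleton z ht]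

theorem mWeight_pairUp_cons_add (ρ : V → V → ℝ) (a : V) (l : List V) :
    mWeight ρ (pairUp (a :: l)) + mWeight ρ (pairUp l) = pathWeight ρ (a :: l) := by
  induction l generalizing a with
  | nil => simp [pairUp, mWeight, pathWeight]
  | cons b t ih =>
    rw [pathWeight_cons_cons, ← ih b]
    simp only [pairUp, mWeight, List.map_cons, List.sum_cons]
    ring

theorem cycWeight_cons (ρ : V → V → ℝ) (a : V) (t : List V) :
    cycWeight ρ (a :: t) = pathWeight ρ (a :: (t ++ [a])) := by
  have hzip : (a :: t).zip (t ++ [a]) = (a :: (t ++ [a])).zip (t ++ [a]) := by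
    simpa using (List.zip_append (l₁ := a :: t) (r₁ := [a]) (r₂ := []) (by simp)).symm
  simp only [cycWeight, pathWeight, List.rotate_cons_succ, List.rotate_zero, List.tail_cons, hzip]

theorem mWeight_pairUp_add_rotate (ρ : V → V → ℝ) {l : List V} (hl : Even l.length) :
    mWeight ρ (pairUp l) + mWeight ρ (pairUp (l.rotate 1)) = cycWeight ρ l := by
  cases l with
  | nil => simp [pairUp, mWeight, cycWeight]
  | cons a t =>
    rw [List.rotate_cons_succ, List.rotate_zero, cycWeight_cons,
      ← mWeight_pairUp_cons_add, ← List.cons_append, pairUp_append_singleton a hl]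

theorem isPM_pairUp [DecidableEq V] {l : List V} (hl : l.Nodup) (he : Even l.length) :
    IsPM l.toFinset (pairUp l) := by
  rw [IsPM, matchVerts_pairUp he]
  exact ⟨hl, rfl⟩

end AlternatePairs

theorem mWeight_nonneg {V : Type*} {ρ : V → V → ℝ} (hnn : ∀ i j, 0 ≤ ρ i j)
    (M : List (V × V)) : 0 ≤ mWeight ρ M :=
  List.sum_nonneg <| by
    simp only [List.mem_map]
    rintro _ ⟨p, -, rfl⟩
    exact hnn p.1 p.2

theorem min_matching_le_half_ham_general {V : Type*} [Fintype V] [DecidableEq V]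
    (ρ : V → V → ℝ) (hnn : ∀ i j, 0 ≤ ρ i j)
    (heven : Even (Fintype.card V))
    (C : List V) (hC : C.Nodup) (hCspan : C.toFinset = Finset.univ) :
    sInf {x | ∃ M : List (V × V), IsPM Finset.univ M ∧ x = mWeight ρ M}
      ≤ cycWeight ρ C / 2 := by
  have hlen : Even C.length := by
    rwa [← List.toFinset_card_of_nodup hC, hCspan, Finset.card_univ]
  have hbdd : BddBelow {x | ∃ M : List (V × V), IsPM Finset.univ M ∧ x = mWeight ρ M} :=
    ⟨0, by rintro x ⟨M, -, rfl⟩; exact mWeight_nonneg hnn M⟩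
  have hM₁ : IsPM Finset.univ (pairUp C) := hCspan ▸ isPM_pairUp hC hlen
  have hM₂ : IsPM Finset.univ (pairUp (C.rotate 1)) := by
    rw [← hCspan, ← List.toFinset_eq_of_perm _ _ (C.rotate_perm 1)]
    exact isPM_pairUp (List.nodup_rotate.mpr hC) (by rwa [List.length_rotate])
  have h₁ := csInf_le hbdd ⟨_, hM₁, rfl⟩
  have h₂ := csInf_le hbdd ⟨_, hM₂, rfl⟩
  linarith [mWeight_pairUp_add_rotate ρ hlen]

/-- In a complete graph on an even vertex set with nonnegative symmetric edge
weights, the minimum weight of a perfect matching is at most half the weight of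
any Hamiltonian cycle `C`. -/
theorem min_matching_le_half_ham {V : Type*} [Fintype V] [DecidableEq V]
    (ρ : V → V → ℝ) (hnn : ∀ i j, 0 ≤ ρ i j) (hsym : ∀ i j, ρ i j = ρ j i)
    (hcard : 3 ≤ Fintype.card V) (heven : Even (Fintype.card V))
    (C : List V) (hC : C.Nodup) (hCspan : C.toFinset = Finset.univ) :
    sInf {x | ∃ M : List (V × V), IsPM Finset.univ M ∧ x = mWeight ρ M}
      ≤ cycWeight ρ C / 2 :=
  min_matching_le_half_ham_general ρ hnn heven C hC hCspan
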